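/- arXiv:1811.12344 — 4 statements merged into one kernel-verified Lean document; each statement's English description precedes it below -/
import Mathlib

section
/- If the coefficients T_n of a power series are weakly increasing positive integers with T_1 = 1 and satisfy T_{n+1} = (1/n) Σ_{i=1}^{n} ( (Σ_{d|i} d T_d) T_{n−i+1} + T_{n−i+1} ), then T_{n+1} ≤ 2 Σ_{i=1}^{n} T_i T_{n−i+1} for all n ≥ 1. -/
/-!
Write `S = Σ_{i=1}^n T_i T_{n-i+1}`. In the recurrence, exchange the sums over `i ≤ n` and `d ∣ i`:
the divisor `d` occurs for the `n / d` multiples `i` of `d`, and each term `d T_d T_{n-i+1}` is at most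
`d T_d T_{n-d+1}` by monotonicity, so the divisor part is at most `Σ_d (n / d) d T_d T_{n-d+1} ≤ n S`.
The remaining part `Σ_i T_{n-i+1}` is at most `S ≤ n S` because `T_i ≥ 1`. Hence `n T_{n+1} ≤ 2 n S`.
-/

open Finset

theorem sum_Icc_sum_divisors_comm {M : Type*} [AddCommMonoid M] (n : ℕ) (f : ℕ → ℕ → M) :
    ∑ i ∈ Icc 1 n, ∑ d ∈ i.divisors, f i d = ∑ d ∈ Icc 1 n, ∑ i ∈ Icc 1 n with d ∣ i, f i d := by
  refine sum_comm' fun i d => ?_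
  simp only [mem_Icc, Nat.mem_divisors, mem_filter]
  constructor
  · rintro ⟨⟨hi, hin⟩, hdi, -⟩
    have hdi' : d ≤ i := Nat.le_of_dvd hi hdi
    exact ⟨⟨⟨hi, hin⟩, hdi⟩, Nat.pos_of_dvd_of_pos hdi hi, hdi'.trans hin⟩
  · rintro ⟨⟨⟨hi, hin⟩, hdi⟩, -⟩
    exact ⟨⟨hi, hin⟩, hdi, by omega⟩

theorem sum_Icc_filter_dvd_le_div_smul {M : Type*} [AddCommMonoid M] [PartialOrder M]
    [IsOrderedAddMonoid M] (g : ℕ → M) (n d : ℕ) (hg : ∀ i, d ≤ i → i ≤ n → g i ≤ g d) :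
    ∑ i ∈ Icc 1 n with d ∣ i, g i ≤ (n / d) • g d := by
  have hcard : #{i ∈ Icc 1 n | d ∣ i} = n / d := Nat.Ioc_filter_dvd_card_eq_div n d
  rw [← hcard]
  refine sum_le_card_nsmul _ _ _ fun i hi => ?_
  obtain ⟨⟨hi, hin⟩, hdi⟩ := by simpa only [mem_filter, mem_Icc] using hi
  exact hg i (Nat.le_of_dvd hi hdi) hin

theorem sum_Icc_sum_divisors_mul_le {T : ℕ → ℕ} (hT : MonotoneOn T (Set.Ici 1)) (n : ℕ) :
    ∑ i ∈ Icc 1 n, (∑ d ∈ i.divisors, d * T d) * T (n - i + 1) ≤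
      n * ∑ i ∈ Icc 1 n, T i * T (n - i + 1) := by
  calc ∑ i ∈ Icc 1 n, (∑ d ∈ i.divisors, d * T d) * T (n - i + 1)
      = ∑ d ∈ Icc 1 n, ∑ i ∈ Icc 1 n with d ∣ i, d * T d * T (n - i + 1) := by
        simp only [sum_mul]
        exact sum_Icc_sum_divisors_comm n fun i d => d * T d * T (n - i + 1)
    _ ≤ ∑ d ∈ Icc 1 n, (n / d) • (d * T d * T (n - d + 1)) := by
        refine sum_le_sum fun d _ => sum_Icc_filter_dvd_le_div_smul _ n d fun i hdi hin => ?_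
        exact Nat.mul_le_mul_left _ (hT (by simp) (by simp) (by omega))
    _ ≤ ∑ d ∈ Icc 1 n, n * (T d * T (n - d + 1)) := by
        refine sum_le_sum fun d _ => ?_
        calc (n / d) • (d * T d * T (n - d + 1)) = (n / d * d) * (T d * T (n - d + 1)) := by
              rw [smul_eq_mul]; ring
          _ ≤ n * (T d * T (n - d + 1)) := Nat.mul_le_mul_right _ (Nat.div_mul_le_self n d)
    _ = n * ∑ i ∈ Icc 1 n, T i * T (n - i + 1) := (mul_sum _ _ _).symm

theorem stmt2_general (T : ℕ → ℕ) (hpos : ∀ n, 1 ≤ n → 1 ≤ T n)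
    (hmono : ∀ n, 1 ≤ n → T n ≤ T (n + 1))
    (hrec : ∀ n, 1 ≤ n → n * T (n + 1) =
      ∑ i ∈ Finset.Icc 1 n, ((∑ d ∈ Nat.divisors i, d * T d) * T (n - i + 1) + T (n - i + 1))) :
    ∀ n, 1 ≤ n → T (n + 1) ≤ 2 * ∑ i ∈ Finset.Icc 1 n, T i * T (n - i + 1) := by
  intro n hn
  have hdivisors := sum_Icc_sum_divisors_mul_le (monotoneOn_nat_Ici_of_le_succ hmono) n
  set S := ∑ i ∈ Icc 1 n, T i * T (n - i + 1)
  have hrest : ∑ i ∈ Icc 1 n, T (n - i + 1) ≤ S :=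
    sum_le_sum fun i hi => Nat.le_mul_of_pos_left _ (hpos i (mem_Icc.1 hi).1)
  have hS : S ≤ n * S := Nat.le_mul_of_pos_left S hn
  refine Nat.le_of_mul_le_mul_left ?_ hn
  rw [hrec n hn, sum_add_distrib]
  linarith

/-- If the coefficients `T_n` are weakly increasing positive integers with `T_1 = 1`
satisfying `n · T_{n+1} = Σ_{i=1}^{n} ((Σ_{d∣i} d·T_d)·T_{n-i+1} + T_{n-i+1})`, then
`T_{n+1} ≤ 2 Σ_{i=1}^{n} T_i T_{n-i+1}` for all `n ≥ 1`. -/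
theorem stmt2 (T : ℕ → ℕ) (h1 : T 1 = 1) (hpos : ∀ n, 1 ≤ n → 1 ≤ T n)
    (hmono : ∀ n, 1 ≤ n → T n ≤ T (n + 1))
    (hrec : ∀ n, 1 ≤ n → n * T (n + 1) =
      ∑ i ∈ Finset.Icc 1 n, ((∑ d ∈ Nat.divisors i, d * T d) * T (n - i + 1) + T (n - i + 1))) :
    ∀ n, 1 ≤ n → T (n + 1) ≤ 2 * ∑ i ∈ Finset.Icc 1 n, T i * T (n - i + 1) :=
  stmt2_general T hpos hmono hrec
end

section
/- Let G = H ⊕₁ K be the 1-sum of graphs H and K, formed by identifying a vertex u ∈ V(H) with a vertex w ∈ V(K) into a single vertex v. Then φ(G) = φ(H \ u)·φ(K) + φ(H)·φ(K \ w) − x·φ(H \ u)·φ(K \ w). -/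
open Matrix Polynomial

/-- The characteristic polynomial `φ(G, x) = det(xI - A(G))` of a finite simple graph. -/
noncomputable def charPolyG {V : Type*} [Fintype V] [DecidableEq V] (G : SimpleGraph V) :
    Polynomial ℤ :=
  letI := Classical.decRel G.Adj
  Matrix.charpoly (G.adjMatrix ℤ)

/-- The graph obtained from `G` by deleting the vertex `v` and all incident edges. -/
def deleteVert {V : Type*} (G : SimpleGraph V) (v : V) : SimpleGraph {u : V // u ≠ v} :=
  G.induce {u : V | u ≠ v}

/-- The 1-sum `H ⊕₁ K` of graphs `H` and `K`, obtained by identifying the vertex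
`u ∈ V(H)` with the vertex `w ∈ V(K)` into a single vertex (the `Sum.inr` vertex). -/
def oneSum {α β : Type*} (H : SimpleGraph α) (K : SimpleGraph β) (u : α) (w : β) :
    SimpleGraph (({x : α // x ≠ u} ⊕ {y : β // y ≠ w}) ⊕ Unit) :=
  SimpleGraph.fromRel (fun a b =>
    match a, b with
    | .inl (.inl x), .inl (.inl y) => H.Adj x.1 y.1
    | .inl (.inr x), .inl (.inr y) => K.Adj x.1 y.1
    | .inl (.inl x), .inr _ => H.Adj x.1 u
    | .inl (.inr y), .inr _ => K.Adj y.1 w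
    | _, _ => False)

/-! ### Auxiliary material -/

/-- The characteristic matrix `X•1 - A(G)` of a graph. -/
noncomputable def cmatG {V : Type*} [Fintype V] [DecidableEq V] (G : SimpleGraph V) :
    Matrix V V (Polynomial ℤ) :=
  letI := Classical.decRel G.Adj
  Matrix.charmatrix (G.adjMatrix ℤ)

lemma charPolyG_eq_det {V : Type*} [Fintype V] [DecidableEq V] (G : SimpleGraph V) :
    charPolyG G = (cmatG G).det := rfl

open scoped Classical in
lemma cmatG_apply {V : Type*} [Fintype V] [DecidableEq V] (G : SimpleGraph V) (i j : V) :
    cmatG G i j = if i = j then X else if G.Adj i j then -1 else 0 := by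
  unfold cmatG
  by_cases h : i = j
  · subst h
    rw [Matrix.charmatrix_apply_eq, if_pos rfl]
    simp
  · rw [Matrix.charmatrix_apply_ne _ _ _ h, if_neg h]
    by_cases hadj : G.Adj i j <;> simp [hadj]

open scoped Classical in
/-- The vector of `-1`s recording adjacency of `u` in `G`. -/
noncomputable def bvecG {V : Type*} (G : SimpleGraph V) (u : V) :
    {x : V // x ≠ u} → Polynomial ℤ :=
  fun x => if G.Adj u x.1 then -1 else 0

/-- A single row as a `Unit`-indexed matrix. -/
def rowU {γ : Type*} (b : γ → Polynomial ℤ) : Matrix Unit γ (Polynomial ℤ) :=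
  Matrix.of fun _ j => b j

/-- A single column as a `Unit`-indexed matrix. -/
def colU {γ : Type*} (c : γ → Polynomial ℤ) : Matrix γ Unit (Polynomial ℤ) :=
  Matrix.of fun i _ => c i

/-- A single entry as a `Unit × Unit` matrix. -/
def cornerU (x : Polynomial ℤ) : Matrix Unit Unit (Polynomial ℤ) :=
  Matrix.of fun _ _ => x

@[simp] lemma rowU_apply {γ : Type*} (b : γ → Polynomial ℤ) (i : Unit) (j : γ) :
    rowU b i j = b j := rfl
@[simp] lemma colU_apply {γ : Type*} (c : γ → Polynomial ℤ) (i : γ) (j : Unit) :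
    colU c i j = c i := rfl
@[simp] lemma cornerU_apply (x : Polynomial ℤ) (i j : Unit) : cornerU x i j = x := rfl

section MatrixLemmas

variable {γ γ₁ γ₂ : Type*} [Fintype γ] [DecidableEq γ] [Fintype γ₁] [DecidableEq γ₁]
  [Fintype γ₂] [DecidableEq γ₂]

/-- Expand a bordered determinant by linearity in the corner row. -/
lemma det_border (x : Polynomial ℤ) (b c : γ → Polynomial ℤ) (M : Matrix γ γ (Polynomial ℤ)) :
    (Matrix.fromBlocks (cornerU x) (rowU b) (colU c) M).det =
      x * M.det + (Matrix.fromBlocks 0 (rowU b) (colU c) M).det := by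
  set N : Matrix (Unit ⊕ γ) (Unit ⊕ γ) (Polynomial ℤ) :=
    Matrix.fromBlocks 0 (rowU b) (colU c) M with hN
  have key : Matrix.fromBlocks (cornerU x) (rowU b) (colU c) M =
      N.updateRow (Sum.inl ())
        (Sum.elim (fun _ => x) (fun _ => 0) + Sum.elim (fun _ => 0) b) := by
    ext i j
    rcases i with i | i <;> rcases j with j | j <;>
      simp [hN, Matrix.updateRow_apply]
  rw [key, Matrix.det_updateRow_add]
  congr 1
  · have h1 : N.updateRow (Sum.inl ()) (Sum.elim (fun _ => x) (fun _ => 0)) =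
        Matrix.fromBlocks (cornerU x) 0 (colU c) M := by
      ext i j
      rcases i with i | i <;> rcases j with j | j <;>
        simp [hN, Matrix.updateRow_apply]
    rw [h1, Matrix.det_fromBlocks_zero₁₂, Matrix.det_unique]
    rfl
  · have h2 : (Sum.elim (fun _ => (0 : Polynomial ℤ)) b) = N (Sum.inl ()) := by
      funext j; rcases j with j | j <;> simp [hN]
    rw [h2, Matrix.updateRow_eq_self]

/-- Row linearity in the corner row for the degenerate bordered matrix. -/
lemma det_top_add (btot b b' c : γ → Polynomial ℤ) (M : Matrix γ γ (Polynomial ℤ))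
    (h : ∀ j, btot j = b j + b' j) :
    (Matrix.fromBlocks 0 (rowU btot) (colU c) M).det =
      (Matrix.fromBlocks 0 (rowU b) (colU c) M).det +
      (Matrix.fromBlocks 0 (rowU b') (colU c) M).det := by
  set N : Matrix (Unit ⊕ γ) (Unit ⊕ γ) (Polynomial ℤ) :=
    Matrix.fromBlocks 0 (rowU b) (colU c) M with hN
  have key : Matrix.fromBlocks 0 (rowU btot) (colU c) M =
      N.updateRow (Sum.inl ()) (Sum.elim (fun _ => 0) b + Sum.elim (fun _ => 0) b') := by
    ext i j
    rcases i with i | i <;> rcases j with j | j <;>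
      simp [hN, Matrix.updateRow_apply, h]
  rw [key, Matrix.det_updateRow_add]
  congr 1
  · have h2 : (Sum.elim (fun _ => (0 : Polynomial ℤ)) b) = N (Sum.inl ()) := by
      funext j; rcases j with j | j <;> simp [hN]
    rw [h2, Matrix.updateRow_eq_self]
  · have h3 : N.updateRow (Sum.inl ()) (Sum.elim (fun _ => 0) b') =
        Matrix.fromBlocks 0 (rowU b') (colU c) M := by
      ext i j
      rcases i with i | i <;> rcases j with j | j <;>
        simp [hN, Matrix.updateRow_apply]
    rw [h3]

/-- Split off the second diagonal block when the corner row is supported on the first part. -/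
lemma det_push_left (b₁ c₁ : γ₁ → Polynomial ℤ) (c₂ : γ₂ → Polynomial ℤ)
    (M₁ : Matrix γ₁ γ₁ (Polynomial ℤ)) (M₂ : Matrix γ₂ γ₂ (Polynomial ℤ)) :
    (Matrix.fromBlocks 0 (rowU (Sum.elim b₁ (fun _ => 0))) (colU (Sum.elim c₁ c₂))
        (Matrix.fromBlocks M₁ 0 0 M₂)).det =
      (Matrix.fromBlocks 0 (rowU b₁) (colU c₁) M₁).det * M₂.det := by
  rw [← Matrix.det_submatrix_equiv_self (Equiv.sumAssoc Unit γ₁ γ₂)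
    (Matrix.fromBlocks 0 (rowU (Sum.elim b₁ (fun _ => 0))) (colU (Sum.elim c₁ c₂))
      (Matrix.fromBlocks M₁ 0 0 M₂))]
  have h : ((Matrix.fromBlocks 0 (rowU (Sum.elim b₁ (fun _ => 0))) (colU (Sum.elim c₁ c₂))
      (Matrix.fromBlocks M₁ 0 0 M₂)).submatrix
        (Equiv.sumAssoc Unit γ₁ γ₂) (Equiv.sumAssoc Unit γ₁ γ₂)) =
      Matrix.fromBlocks (Matrix.fromBlocks 0 (rowU b₁) (colU c₁) M₁) 0
        (Matrix.of fun (i : γ₂) j => Sum.elim (fun _ => c₂ i) (fun _ => 0) j) M₂ := by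
    ext i j
    rcases i with (i | i) | i <;> rcases j with (j | j) | j <;>
      simp [Equiv.sumAssoc]
  rw [h, Matrix.det_fromBlocks_zero₁₂]

/-- Split off the first diagonal block when the corner row is supported on the second part. -/
lemma det_push_right (b₂ c₂ : γ₂ → Polynomial ℤ) (c₁ : γ₁ → Polynomial ℤ)
    (M₁ : Matrix γ₁ γ₁ (Polynomial ℤ)) (M₂ : Matrix γ₂ γ₂ (Polynomial ℤ)) :
    (Matrix.fromBlocks 0 (rowU (Sum.elim (fun _ => 0) b₂)) (colU (Sum.elim c₁ c₂))
        (Matrix.fromBlocks M₁ 0 0 M₂)).det =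
      M₁.det * (Matrix.fromBlocks 0 (rowU b₂) (colU c₂) M₂).det := by
  let e : (Unit ⊕ γ₂) ⊕ γ₁ ≃ Unit ⊕ (γ₁ ⊕ γ₂) :=
    (Equiv.sumAssoc Unit γ₂ γ₁).trans ((Equiv.refl Unit).sumCongr (Equiv.sumComm γ₂ γ₁))
  rw [← Matrix.det_submatrix_equiv_self e
    (Matrix.fromBlocks 0 (rowU (Sum.elim (fun _ => 0) b₂)) (colU (Sum.elim c₁ c₂))
      (Matrix.fromBlocks M₁ 0 0 M₂))]
  have h : ((Matrix.fromBlocks 0 (rowU (Sum.elim (fun _ => 0) b₂)) (colU (Sum.elim c₁ c₂))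
      (Matrix.fromBlocks M₁ 0 0 M₂)).submatrix e e) =
      Matrix.fromBlocks (Matrix.fromBlocks 0 (rowU b₂) (colU c₂) M₂) 0
        (Matrix.of fun (i : γ₁) j => Sum.elim (fun _ => c₁ i) (fun _ => 0) j) M₁ := by
    ext i j
    rcases i with (i | i) | i <;> rcases j with (j | j) | j <;>
      simp [e, Equiv.sumAssoc, Equiv.sumCongr]
  rw [h, Matrix.det_fromBlocks_zero₁₂, mul_comm]

end MatrixLemmas

/-- The equivalence separating out the vertex `u`. -/
def vertEquiv {V : Type*} [DecidableEq V] (u : V) : Unit ⊕ {x : V // x ≠ u} ≃ V where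
  toFun := Sum.elim (fun _ => u) Subtype.val
  invFun a := if h : a = u then Sum.inl () else Sum.inr ⟨a, h⟩
  left_inv := by rintro (u | ⟨x, hx⟩) <;> simp [*]
  right_inv a := by by_cases h : a = u <;> simp [h]

lemma deleteVert_adj {V : Type*} (G : SimpleGraph V) (u : V) (i j : {x : V // x ≠ u}) :
    (deleteVert G u).Adj i j ↔ G.Adj i.1 j.1 := by
  simp [deleteVert]

open scoped Classical in
lemma cmatG_deleteVert {V : Type*} [Fintype V] [DecidableEq V] (G : SimpleGraph V) (u : V)
    (i j : {x : V // x ≠ u}) :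
    cmatG (deleteVert G u) i j = if i.1 = j.1 then X else if G.Adj i.1 j.1 then -1 else 0 := by
  classical
  rw [cmatG_apply]
  by_cases h : i.1 = j.1
  · simp [h, Subtype.ext_iff]
  · by_cases h2 : G.Adj i.1 j.1 <;>
      simp [h, h2, Subtype.ext_iff, deleteVert_adj]

/-- One-vertex expansion of the characteristic polynomial. -/
lemma charPolyG_vertex {V : Type*} [Fintype V] [DecidableEq V] (G : SimpleGraph V) (u : V) :
    charPolyG G = X * charPolyG (deleteVert G u) +
      (Matrix.fromBlocks 0 (rowU (bvecG G u)) (colU (bvecG G u))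
        (cmatG (deleteVert G u))).det := by
  classical
  rw [charPolyG_eq_det, ← Matrix.det_submatrix_equiv_self (vertEquiv u) (cmatG G)]
  have h : (cmatG G).submatrix (vertEquiv u) (vertEquiv u) =
      Matrix.fromBlocks (cornerU X) (rowU (bvecG G u)) (colU (bvecG G u))
        (cmatG (deleteVert G u)) := by
    refine Matrix.ext fun i j => ?_
    rcases i with i | i <;> rcases j with j | j <;>
      simp only [Matrix.submatrix_apply, Matrix.fromBlocks_apply₁₁, Matrix.fromBlocks_apply₁₂,
        Matrix.fromBlocks_apply₂₁, Matrix.fromBlocks_apply₂₂, rowU_apply, colU_apply,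
        cornerU_apply, vertEquiv, Equiv.coe_fn_mk, Sum.elim_inl, Sum.elim_inr,
        cmatG_apply, cmatG_deleteVert]
    · simp
    · by_cases h2 : G.Adj u j.1 <;> simp [bvecG, h2, Ne.symm j.2]
    · by_cases h2 : G.Adj u i.1
      · simp [bvecG, h2, h2.symm, i.2]
      · have h3 : ¬ G.Adj i.1 u := fun hc => h2 hc.symm
        simp [bvecG, h2, h3, i.2]
    · by_cases hij : i.1 = j.1
      · simp [Subtype.ext_iff, hij]
      · by_cases h2 : G.Adj i.1 j.1 <;>
          simp [Subtype.ext_iff, hij, h2, deleteVert_adj]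
  rw [h, det_border, charPolyG_eq_det]

section OneSumAdj

variable {α β : Type*} (H : SimpleGraph α) (K : SimpleGraph β) (u : α) (w : β)

lemma oneSum_adj_HH (x y : {x : α // x ≠ u}) :
    (oneSum H K u w).Adj (.inl (.inl x)) (.inl (.inl y)) ↔ H.Adj x.1 y.1 := by
  rw [oneSum, SimpleGraph.fromRel_adj]
  constructor
  · rintro ⟨hne, h | h⟩
    · exact h
    · exact h.symm
  · intro h
    refine ⟨fun hc => h.ne (congrArg Subtype.val (Sum.inl.inj (Sum.inl.inj hc))), Or.inl h⟩

lemma oneSum_adj_KK (x y : {y : β // y ≠ w}) :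
    (oneSum H K u w).Adj (.inl (.inr x)) (.inl (.inr y)) ↔ K.Adj x.1 y.1 := by
  rw [oneSum, SimpleGraph.fromRel_adj]
  constructor
  · rintro ⟨hne, h | h⟩
    · exact h
    · exact h.symm
  · intro h
    refine ⟨fun hc => h.ne (congrArg Subtype.val (Sum.inr.inj (Sum.inl.inj hc))), Or.inl h⟩

lemma oneSum_adj_HK (x : {x : α // x ≠ u}) (y : {y : β // y ≠ w}) :
    ¬ (oneSum H K u w).Adj (.inl (.inl x)) (.inl (.inr y)) := by
  rw [oneSum, SimpleGraph.fromRel_adj]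
  rintro ⟨hne, h | h⟩ <;> exact h

lemma oneSum_adj_KH (y : {y : β // y ≠ w}) (x : {x : α // x ≠ u}) :
    ¬ (oneSum H K u w).Adj (.inl (.inr y)) (.inl (.inl x)) := by
  intro hc
  exact oneSum_adj_HK H K u w x y hc.symm

lemma oneSum_adj_Hv (x : {x : α // x ≠ u}) (z : Unit) :
    (oneSum H K u w).Adj (.inl (.inl x)) (.inr z) ↔ H.Adj u x.1 := by
  rw [oneSum, SimpleGraph.fromRel_adj]
  constructor
  · rintro ⟨hne, h | h⟩
    · exact h.symm
    · exact h.elim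
  · intro h
    exact ⟨by simp, Or.inl h.symm⟩

lemma oneSum_adj_vH (x : {x : α // x ≠ u}) (z : Unit) :
    (oneSum H K u w).Adj (.inr z) (.inl (.inl x)) ↔ H.Adj u x.1 := by
  rw [(oneSum H K u w).adj_comm, oneSum_adj_Hv]

lemma oneSum_adj_Kv (y : {y : β // y ≠ w}) (z : Unit) :
    (oneSum H K u w).Adj (.inl (.inr y)) (.inr z) ↔ K.Adj w y.1 := by
  rw [oneSum, SimpleGraph.fromRel_adj]
  constructor
  · rintro ⟨hne, h | h⟩
    · exact h.symm
    · exact h.elim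
  · intro h
    exact ⟨by simp, Or.inl h.symm⟩

lemma oneSum_adj_vK (y : {y : β // y ≠ w}) (z : Unit) :
    (oneSum H K u w).Adj (.inr z) (.inl (.inr y)) ↔ K.Adj w y.1 := by
  rw [(oneSum H K u w).adj_comm, oneSum_adj_Kv]

end OneSumAdj

/-- For the 1-sum `G = H ⊕₁ K` at vertices `u ∈ V(H)` and `w ∈ V(K)`,
`φ(G) = φ(H \ u)·φ(K) + φ(H)·φ(K \ w) - x·φ(H \ u)·φ(K \ w)`. -/
theorem stmt6 {α β : Type*} [Fintype α] [DecidableEq α] [Fintype β] [DecidableEq β]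
    (H : SimpleGraph α) (K : SimpleGraph β) (u : α) (w : β) :
    charPolyG (oneSum H K u w) =
      charPolyG (deleteVert H u) * charPolyG K + charPolyG H * charPolyG (deleteVert K w) -
        Polynomial.X * (charPolyG (deleteVert H u) * charPolyG (deleteVert K w)) := by
  classical
  let e : Unit ⊕ ({x : α // x ≠ u} ⊕ {y : β // y ≠ w}) ≃
      ({x : α // x ≠ u} ⊕ {y : β // y ≠ w}) ⊕ Unit := Equiv.sumComm _ _
  have hdet : charPolyG (oneSum H K u w) = ((cmatG (oneSum H K u w)).submatrix e e).det := by
    rw [charPolyG_eq_det, Matrix.det_submatrix_equiv_self]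
  have hblocks : (cmatG (oneSum H K u w)).submatrix e e =
      Matrix.fromBlocks (cornerU X)
        (rowU (Sum.elim (bvecG H u) (bvecG K w)))
        (colU (Sum.elim (bvecG H u) (bvecG K w)))
        (Matrix.fromBlocks (cmatG (deleteVert H u)) 0 0 (cmatG (deleteVert K w))) := by
    refine Matrix.ext fun i j => ?_
    rcases i with i | (i | i) <;> rcases j with j | (j | j) <;>
      simp only [Matrix.submatrix_apply, Matrix.fromBlocks_apply₁₁, Matrix.fromBlocks_apply₁₂,
        Matrix.fromBlocks_apply₂₁, Matrix.fromBlocks_apply₂₂, rowU_apply, colU_apply,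
        cornerU_apply, Equiv.sumComm_apply, Sum.swap_inl, Sum.swap_inr, Sum.elim_inl,
        Sum.elim_inr, cmatG_apply, cmatG_deleteVert, Matrix.zero_apply, e]
    -- (v, v)
    · simp
    -- (v, H j)
    · by_cases h2 : H.Adj u j.1 <;> simp [bvecG, oneSum_adj_vH, h2]
    -- (v, K j)
    · by_cases h2 : K.Adj w j.1 <;> simp [bvecG, oneSum_adj_vK, h2]
    -- (H i, v)
    · by_cases h2 : H.Adj u i.1 <;> simp [bvecG, oneSum_adj_Hv, h2]
    -- (H i, H j)
    · by_cases hij : i.1 = j.1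
      · simp [Subtype.ext_iff, hij]
      · by_cases h2 : H.Adj i.1 j.1 <;>
          simp [Subtype.ext_iff, hij, h2, oneSum_adj_HH, deleteVert_adj]
    -- (H i, K j)
    · simp [oneSum_adj_HK H K u w i j]
    -- (K i, v)
    · by_cases h2 : K.Adj w i.1 <;> simp [bvecG, oneSum_adj_Kv, h2]
    -- (K i, H j)
    · simp [oneSum_adj_KH H K u w i j]
    -- (K i, K j)
    · by_cases hij : i.1 = j.1
      · simp [Subtype.ext_iff, hij]
      · by_cases h2 : K.Adj i.1 j.1 <;>
          simp [Subtype.ext_iff, hij, h2, oneSum_adj_KK, deleteVert_adj]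
  have hHexp := charPolyG_vertex H u
  have hKexp := charPolyG_vertex K w
  have hH : (Matrix.fromBlocks 0 (rowU (bvecG H u)) (colU (bvecG H u))
      (cmatG (deleteVert H u))).det = charPolyG H - X * charPolyG (deleteVert H u) := by
    rw [hHexp]; ring
  have hK : (Matrix.fromBlocks 0 (rowU (bvecG K w)) (colU (bvecG K w))
      (cmatG (deleteVert K w))).det = charPolyG K - X * charPolyG (deleteVert K w) := by
    rw [hKexp]; ring
  rw [hdet, hblocks, det_border,
    det_top_add (Sum.elim (bvecG H u) (bvecG K w)) (Sum.elim (bvecG H u) (fun _ => 0))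
      (Sum.elim (fun _ => 0) (bvecG K w)) (Sum.elim (bvecG H u) (bvecG K w))
      (Matrix.fromBlocks (cmatG (deleteVert H u)) 0 0 (cmatG (deleteVert K w)))
      (by rintro (j | j) <;> simp),
    det_push_left, det_push_right, Matrix.det_fromBlocks_zero₁₂, hH, hK,
    ← charPolyG_eq_det, ← charPolyG_eq_det]
  ring
end

section
/- Let W₁, W₂ be weighted graphs and let W be the weighted graph obtained by identifying a vertex v₁ ∈ W₁ with a vertex v₂ ∈ W₂ into a vertex v, where v receives some positive integer weight w(v) (and v has weight w₁(v) in W₁ and w₂(v) in W₂). Then φ*(W) = φ*(W₁ \ v)·φ*(W₂) + φ*(W₁)·φ*(W₂ \ v) + (x^{w(v)} − x^{w₁(v)} − x^{w₂(v)})·φ*(W₁ \ v)·φ*(W₂ \ v). -/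
/-- The weighted characteristic polynomial `φ*(W, x) = det(I*(x) - A(W))`, where
`I*(x)` is the diagonal matrix whose `ii`-entry is `x^{w(i)}`. -/
noncomputable def wcharPoly {V : Type*} [Fintype V] [DecidableEq V]
    (G : SimpleGraph V) (w : V → ℕ+) : Polynomial ℤ :=
  letI := Classical.decRel G.Adj
  Matrix.det
    (Matrix.diagonal (fun i => (Polynomial.X : Polynomial ℤ) ^ (w i : ℕ)) -
      G.adjMatrix (Polynomial ℤ))

open Matrix Polynomial
open scoped Classical

namespace Stmt10Aux

variable {R : Type*} [CommRing R]

/-- determinant is affine in the corner entry -/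
lemma det_corner {n : Type*} [Fintype n] [DecidableEq n]
    (A : Matrix n n R) (B : Matrix n Unit R) (C : Matrix Unit n R) (t : R) :
    (fromBlocks A B C (of fun _ _ => t)).det
      = (fromBlocks A B C 0).det + t * A.det := by
  have h0 : fromBlocks A B C (of fun _ _ => t)
      = updateRow (fromBlocks A B C 0) (Sum.inr ())
          (Sum.elim (fun j => C () j) (fun _ => 0) +
            t • Sum.elim (fun _ => 0) (fun _ => 1)) := by
    ext i j
    rcases i with i | i <;> rcases j with j | j <;> simp [updateRow_apply]
  rw [h0, det_updateRow_add, det_updateRow_smul]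
  congr 1
  · congr 1
    ext i j
    rcases i with i | i <;> rcases j with j | j <;> simp [updateRow_apply]
  · congr 1
    rw [show updateRow (fromBlocks A B C 0) (Sum.inr ())
        (Sum.elim (fun _ => (0:R)) (fun _ => 1)) = fromBlocks A B 0 1 from ?_]
    · rw [det_fromBlocks_zero₂₁, det_one, mul_one]
    · ext i j
      rcases i with i | i <;> rcases j with j | j <;>
        simp [updateRow_apply, one_apply]

variable {m n : Type*} [Fintype m] [DecidableEq m] [Fintype n] [DecidableEq n]

/-- the bordered two-block matrix with corner `0` -/
noncomputable def Nmat (M₁ : Matrix m m R) (M₂ : Matrix n n R)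
    (b₁ c₁ : m → R) (b₂ c₂ : n → R) :
    Matrix ((m ⊕ n) ⊕ Unit) ((m ⊕ n) ⊕ Unit) R :=
  fromBlocks (fromBlocks M₁ 0 0 M₂) (of fun i _ => Sum.elim b₁ b₂ i)
    (of fun _ j => Sum.elim c₁ c₂ j) 0

/-- the bordered one-block matrix with corner `0` -/
noncomputable def Bmat (M : Matrix m m R) (b c : m → R) :
    Matrix (m ⊕ Unit) (m ⊕ Unit) R :=
  fromBlocks M (of fun i _ => b i) (of fun _ j => c j) 0

lemma rowsplit (M₁ : Matrix m m R) (M₂ : Matrix n n R) (b₁ c₁ : m → R) (b₂ c₂ : n → R) :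
    (Nmat M₁ M₂ b₁ c₁ b₂ c₂).det
      = (Nmat M₁ M₂ b₁ c₁ b₂ 0).det + (Nmat M₁ M₂ b₁ 0 b₂ c₂).det := by
  have h0 : Nmat M₁ M₂ b₁ c₁ b₂ c₂
      = updateRow (Nmat M₁ M₂ b₁ 0 b₂ 0) (Sum.inr ())
          (Sum.elim (Sum.elim c₁ (0 : n → R)) (0 : Unit → R) +
            Sum.elim (Sum.elim (0 : m → R) c₂) (0 : Unit → R)) := by
    ext i j
    rcases i with (i | i) | i <;> rcases j with (j | j) | j <;>
      simp [Nmat, updateRow_apply]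
  rw [h0, det_updateRow_add]
  congr 1 <;> [skip; skip] <;> {
    congr 1
    ext i j
    rcases i with (i | i) | i <;> rcases j with (j | j) | j <;>
      simp [Nmat, updateRow_apply]
  }

lemma colsplit (M₁ : Matrix m m R) (M₂ : Matrix n n R) (b₁ c₁ : m → R) (b₂ c₂ : n → R) :
    (Nmat M₁ M₂ b₁ c₁ b₂ c₂).det
      = (Nmat M₁ M₂ b₁ c₁ 0 c₂).det + (Nmat M₁ M₂ 0 c₁ b₂ c₂).det := by
  have h0 : Nmat M₁ M₂ b₁ c₁ b₂ c₂
      = updateCol (Nmat M₁ M₂ 0 c₁ 0 c₂) (Sum.inr ())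
          (Sum.elim (Sum.elim b₁ (0 : n → R)) (0 : Unit → R) +
            Sum.elim (Sum.elim (0 : m → R) b₂) (0 : Unit → R)) := by
    ext i j
    rcases i with (i | i) | i <;> rcases j with (j | j) | j <;>
      simp [Nmat, updateCol_apply]
  rw [h0, det_updateCol_add]
  congr 1 <;> [skip; skip] <;> {
    congr 1
    ext i j
    rcases i with (i | i) | i <;> rcases j with (j | j) | j <;>
      simp [Nmat, updateCol_apply]
  }

def eL (m n : Type*) : ((m ⊕ n) ⊕ Unit) ≃ ((m ⊕ Unit) ⊕ n) where
  toFun x := match x with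
    | .inl (.inl a) => .inl (.inl a)
    | .inl (.inr b) => .inr b
    | .inr u => .inl (.inr u)
  invFun x := match x with
    | .inl (.inl a) => .inl (.inl a)
    | .inl (.inr u) => .inr u
    | .inr b => .inl (.inr b)
  left_inv := by rintro ((a | b) | u) <;> rfl
  right_inv := by rintro ((a | u) | b) <;> rfl

def eR (m n : Type*) : ((m ⊕ n) ⊕ Unit) ≃ (m ⊕ (n ⊕ Unit)) where
  toFun x := match x with
    | .inl (.inl a) => .inl a
    | .inl (.inr b) => .inr (.inl b)
    | .inr u => .inr (.inr u)
  invFun x := match x with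
    | .inl a => .inl (.inl a)
    | .inr (.inl b) => .inl (.inr b)
    | .inr (.inr u) => .inr u
  left_inv := by rintro ((a | b) | u) <;> rfl
  right_inv := by rintro (a | b | u) <;> rfl

lemma evalA (M₁ : Matrix m m R) (M₂ : Matrix n n R) (b₁ c₁ : m → R) :
    (Nmat M₁ M₂ b₁ c₁ (0 : n → R) (0 : n → R)).det = (Bmat M₁ b₁ c₁).det * M₂.det := by
  rw [← det_submatrix_equiv_self (eL m n).symm (Nmat M₁ M₂ b₁ c₁ 0 0)]
  rw [show (Nmat M₁ M₂ b₁ c₁ (0 : n → R) 0).submatrix (eL m n).symm (eL m n).symm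
      = fromBlocks (Bmat M₁ b₁ c₁) 0 0 M₂ from ?_]
  · rw [det_fromBlocks_zero₂₁]
  · ext i j
    rcases i with (i | i) | i <;> rcases j with (j | j) | j <;>
      simp [Nmat, Bmat, eL]

lemma evalZ1 (M₁ : Matrix m m R) (M₂ : Matrix n n R) (c₁ : m → R) (b₂ : n → R) :
    (Nmat M₁ M₂ (0 : m → R) c₁ b₂ (0 : n → R)).det = 0 := by
  rw [← det_submatrix_equiv_self (eL m n).symm (Nmat M₁ M₂ 0 c₁ b₂ 0)]
  rw [show (Nmat M₁ M₂ (0 : m → R) c₁ b₂ 0).submatrix (eL m n).symm (eL m n).symm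
      = fromBlocks (Bmat M₁ 0 c₁) 0
          (of fun i j => Sum.elim (fun _ => (0:R)) (fun _ => b₂ i) j) M₂ from ?_]
  · rw [det_fromBlocks_zero₁₂]
    have : (Bmat M₁ (0 : m → R) c₁).det = 0 := by
      apply det_eq_zero_of_column_eq_zero (Sum.inr ())
      rintro (i | i) <;> simp [Bmat]
    rw [this, zero_mul]
  · ext i j
    rcases i with (i | i) | i <;> rcases j with (j | j) | j <;>
      simp [Nmat, Bmat, eL]

lemma evalZ2 (M₁ : Matrix m m R) (M₂ : Matrix n n R) (b₁ : m → R) (c₂ : n → R) :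
    (Nmat M₁ M₂ b₁ (0 : m → R) (0 : n → R) c₂).det = 0 := by
  rw [← det_submatrix_equiv_self (eR m n).symm (Nmat M₁ M₂ b₁ 0 0 c₂)]
  rw [show (Nmat M₁ M₂ b₁ (0 : m → R) 0 c₂).submatrix (eR m n).symm (eR m n).symm
      = fromBlocks M₁ (of fun i j => Sum.elim (fun _ => (0:R)) (fun _ => b₁ i) j)
          0 (Bmat M₂ 0 c₂) from ?_]
  · rw [det_fromBlocks_zero₂₁]
    have : (Bmat M₂ (0 : n → R) c₂).det = 0 := by
      apply det_eq_zero_of_column_eq_zero (Sum.inr ())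
      rintro (i | i) <;> simp [Bmat]
    rw [this, mul_zero]
  · ext i j
    rcases i with i | i | i <;> rcases j with j | j | j <;>
      simp [Nmat, Bmat, eR]

lemma evalB (M₁ : Matrix m m R) (M₂ : Matrix n n R) (b₂ c₂ : n → R) :
    (Nmat M₁ M₂ (0 : m → R) (0 : m → R) b₂ c₂).det = M₁.det * (Bmat M₂ b₂ c₂).det := by
  rw [← det_submatrix_equiv_self (eR m n).symm (Nmat M₁ M₂ 0 0 b₂ c₂)]
  rw [show (Nmat M₁ M₂ (0 : m → R) 0 b₂ c₂).submatrix (eR m n).symm (eR m n).symm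
      = fromBlocks M₁ 0 0 (Bmat M₂ b₂ c₂) from ?_]
  · rw [det_fromBlocks_zero₂₁]
  · ext i j
    rcases i with i | i | i <;> rcases j with j | j | j <;>
      simp [Nmat, Bmat, eR]

lemma det_key (M₁ : Matrix m m R) (M₂ : Matrix n n R) (b₁ c₁ : m → R) (b₂ c₂ : n → R) :
    (Nmat M₁ M₂ b₁ c₁ b₂ c₂).det
      = (Bmat M₁ b₁ c₁).det * M₂.det + M₁.det * (Bmat M₂ b₂ c₂).det := by
  rw [rowsplit, colsplit M₁ M₂ b₁ c₁ b₂ 0, colsplit M₁ M₂ b₁ 0 b₂ c₂,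
    evalA M₁ M₂ b₁ c₁, evalZ1 M₁ M₂ c₁ b₂, evalZ2 M₁ M₂ b₁ c₂, evalB M₁ M₂ b₂ c₂]
  ring

/-- the matrix whose determinant is `wcharPoly` -/
noncomputable def wmat {V : Type*} [Fintype V] [DecidableEq V]
    (G : SimpleGraph V) (w : V → ℕ+) : Matrix V V (Polynomial ℤ) :=
  letI := Classical.decRel G.Adj
  Matrix.diagonal (fun i => (Polynomial.X : Polynomial ℤ) ^ (w i : ℕ)) -
    G.adjMatrix (Polynomial ℤ)

lemma wcharPoly_eq {V : Type*} [Fintype V] [DecidableEq V]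
    (G : SimpleGraph V) (w : V → ℕ+) : wcharPoly G w = (wmat G w).det := rfl

lemma wmat_apply {V : Type*} [Fintype V] [DecidableEq V]
    (G : SimpleGraph V) (w : V → ℕ+) (i j : V) :
    wmat G w i j = (if i = j then (Polynomial.X : Polynomial ℤ) ^ (w i : ℕ) else 0) -
      (if G.Adj i j then 1 else 0) := by
  classical
  simp only [wmat, Matrix.sub_apply, Matrix.diagonal_apply, SimpleGraph.adjMatrix_apply]

def vertEquiv {V : Type*} [DecidableEq V] (v : V) : ({u : V // u ≠ v} ⊕ Unit) ≃ V where
  toFun := Sum.elim Subtype.val (fun _ => v)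
  invFun a := if h : a = v then Sum.inr () else Sum.inl ⟨a, h⟩
  left_inv := by
    rintro (x | u)
    · simp [x.2]
    · simp
  right_inv a := by by_cases h : a = v <;> simp [h]

lemma split_vertex {V : Type*} [Fintype V] [DecidableEq V]
    (G : SimpleGraph V) (w : V → ℕ+) (v : V) :
    wcharPoly G w =
      (fromBlocks (wmat (deleteVert G v) fun x => w x.1)
        (of fun (x : {u : V // u ≠ v}) (_ : Unit) => wmat G w x.1 v)
        (of fun (_ : Unit) (y : {u : V // u ≠ v}) => wmat G w v y.1)
        (of fun (_ : Unit) (_ : Unit) => (Polynomial.X : Polynomial ℤ) ^ (w v : ℕ))).det := by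
  rw [wcharPoly_eq, ← det_submatrix_equiv_self (vertEquiv v) (wmat G w)]
  congr 1
  refine Matrix.ext fun i j => ?_
  rcases i with i | i <;> rcases j with j | j
  · show wmat G w i.1 j.1 = wmat (deleteVert G v) (fun x => w x.1) i j
    rw [wmat_apply, wmat_apply]
    have hd : (deleteVert G v).Adj i j ↔ G.Adj i.1 j.1 := by
      simp [deleteVert]
    by_cases hij : i = j
    · subst hij; simp [hd]
    · have : i.1 ≠ j.1 := fun h => hij (Subtype.ext h)
      simp [hd, hij, this]
  · show wmat G w i.1 v = _
    simp [vertEquiv]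
  · show wmat G w v j.1 = _
    simp [vertEquiv]
  · show wmat G w v v = _
    rw [wmat_apply]
    simp [vertEquiv]

section Adj

variable {α β : Type*} (H : SimpleGraph α) (K : SimpleGraph β) (u : α) (w : β)

lemma oneSum_adj_11 (x y : {a : α // a ≠ u}) :
    (oneSum H K u w).Adj (.inl (.inl x)) (.inl (.inl y)) ↔ H.Adj x.1 y.1 := by
  simp only [oneSum, SimpleGraph.fromRel_adj]
  constructor
  · rintro ⟨-, h | h⟩
    · exact h
    · exact h.symm
  · exact fun h => ⟨by simpa [Subtype.ext_iff] using h.ne, Or.inl h⟩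

lemma oneSum_adj_22 (x y : {b : β // b ≠ w}) :
    (oneSum H K u w).Adj (.inl (.inr x)) (.inl (.inr y)) ↔ K.Adj x.1 y.1 := by
  simp only [oneSum, SimpleGraph.fromRel_adj]
  constructor
  · rintro ⟨-, h | h⟩
    · exact h
    · exact h.symm
  · exact fun h => ⟨by simpa [Subtype.ext_iff] using h.ne, Or.inl h⟩

lemma oneSum_adj_1r (x : {a : α // a ≠ u}) (t : Unit) :
    (oneSum H K u w).Adj (.inl (.inl x)) (.inr t) ↔ H.Adj x.1 u := by
  simp only [oneSum, SimpleGraph.fromRel_adj]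
  constructor
  · rintro ⟨-, h | h⟩
    · exact h
    · exact h.elim
  · exact fun h => ⟨by simp, Or.inl h⟩

lemma oneSum_adj_r1 (t : Unit) (x : {a : α // a ≠ u}) :
    (oneSum H K u w).Adj (.inr t) (.inl (.inl x)) ↔ H.Adj u x.1 := by
  simp only [oneSum, SimpleGraph.fromRel_adj]
  constructor
  · rintro ⟨-, h | h⟩
    · exact h.elim
    · exact h.symm
  · exact fun h => ⟨by simp, Or.inr h.symm⟩

lemma oneSum_adj_2r (y : {b : β // b ≠ w}) (t : Unit) :
    (oneSum H K u w).Adj (.inl (.inr y)) (.inr t) ↔ K.Adj y.1 w := by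
  simp only [oneSum, SimpleGraph.fromRel_adj]
  constructor
  · rintro ⟨-, h | h⟩
    · exact h
    · exact h.elim
  · exact fun h => ⟨by simp, Or.inl h⟩

lemma oneSum_adj_r2 (t : Unit) (y : {b : β // b ≠ w}) :
    (oneSum H K u w).Adj (.inr t) (.inl (.inr y)) ↔ K.Adj w y.1 := by
  simp only [oneSum, SimpleGraph.fromRel_adj]
  constructor
  · rintro ⟨-, h | h⟩
    · exact h.elim
    · exact h.symm
  · exact fun h => ⟨by simp, Or.inr h.symm⟩

lemma oneSum_adj_12 (x : {a : α // a ≠ u}) (y : {b : β // b ≠ w}) :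
    ¬ (oneSum H K u w).Adj (.inl (.inl x)) (.inl (.inr y)) := by
  simp only [oneSum, SimpleGraph.fromRel_adj]
  rintro ⟨-, h | h⟩ <;> exact h.elim

lemma oneSum_adj_21 (y : {b : β // b ≠ w}) (x : {a : α // a ≠ u}) :
    ¬ (oneSum H K u w).Adj (.inl (.inr y)) (.inl (.inl x)) := by
  simp only [oneSum, SimpleGraph.fromRel_adj]
  rintro ⟨-, h | h⟩ <;> exact h.elim

lemma oneSum_adj_rr (t t' : Unit) :
    ¬ (oneSum H K u w).Adj (.inr t) (.inr t') := by
  simp only [oneSum, SimpleGraph.fromRel_adj]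
  rintro ⟨h, -⟩
  exact h rfl

end Adj

/-- the matrix of the one-sum in block form -/
lemma oneSum_wmat {α β : Type*} [Fintype α] [DecidableEq α] [Fintype β] [DecidableEq β]
    (W₁ : SimpleGraph α) (w₁ : α → ℕ+) (W₂ : SimpleGraph β) (w₂ : β → ℕ+)
    (v₁ : α) (v₂ : β) (wv : ℕ+) :
    wmat (oneSum W₁ W₂ v₁ v₂)
        (Sum.elim (Sum.elim (fun x => w₁ x.1) (fun y => w₂ y.1)) (fun _ => wv))
      = fromBlocks
          (fromBlocks (wmat (deleteVert W₁ v₁) fun x => w₁ x.1) 0 0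
            (wmat (deleteVert W₂ v₂) fun y => w₂ y.1))
          (of fun i _ => Sum.elim (fun x => wmat W₁ w₁ x.1 v₁)
            (fun y => wmat W₂ w₂ y.1 v₂) i)
          (of fun _ j => Sum.elim (fun x => wmat W₁ w₁ v₁ x.1)
            (fun y => wmat W₂ w₂ v₂ y.1) j)
          (of fun _ _ => (Polynomial.X : Polynomial ℤ) ^ (wv : ℕ)) := by
  refine Matrix.ext fun i j => ?_
  rcases i with (x | y) | t <;> rcases j with (x' | y') | t'
  · show _ = wmat (deleteVert W₁ v₁) (fun x => w₁ x.1) x x'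
    rw [wmat_apply, wmat_apply]
    have hd : (deleteVert W₁ v₁).Adj x x' ↔ W₁.Adj x.1 x'.1 := by simp [deleteVert]
    by_cases hxy : x = x'
    · subst hxy; simp [oneSum_adj_11, hd]
    · have h1 : x.1 ≠ x'.1 := fun h => hxy (Subtype.ext h)
      simp [oneSum_adj_11, hd, hxy, h1]
  · rw [wmat_apply]
    simp [oneSum_adj_12]
  · show _ = wmat W₁ w₁ x.1 v₁
    rw [wmat_apply, wmat_apply]
    simp [oneSum_adj_1r, x.2]
  · rw [wmat_apply]
    simp [oneSum_adj_21]
  · show _ = wmat (deleteVert W₂ v₂) (fun y => w₂ y.1) y y'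
    rw [wmat_apply, wmat_apply]
    have hd : (deleteVert W₂ v₂).Adj y y' ↔ W₂.Adj y.1 y'.1 := by simp [deleteVert]
    by_cases hxy : y = y'
    · subst hxy; simp [oneSum_adj_22, hd]
    · have h1 : y.1 ≠ y'.1 := fun h => hxy (Subtype.ext h)
      simp [oneSum_adj_22, hd, hxy, h1]
  · show _ = wmat W₂ w₂ y.1 v₂
    rw [wmat_apply, wmat_apply]
    simp [oneSum_adj_2r, y.2]
  · show _ = wmat W₁ w₁ v₁ x'.1
    rw [wmat_apply, wmat_apply]
    have : v₁ ≠ x'.1 := fun h => x'.2 h.symm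
    simp [oneSum_adj_r1, this]
  · show _ = wmat W₂ w₂ v₂ y'.1
    rw [wmat_apply, wmat_apply]
    have : v₂ ≠ y'.1 := fun h => y'.2 h.symm
    simp [oneSum_adj_r2, this]
  · rw [wmat_apply]
    simp [oneSum_adj_rr]

end Stmt10Aux

/-- Identification (1-sum) formula for the weighted characteristic polynomial: if `W` is
obtained from weighted graphs `W₁`, `W₂` by identifying `v₁ ∈ W₁` with `v₂ ∈ W₂` into a
vertex `v` of weight `wv`, then
`φ*(W) = φ*(W₁ \ v)·φ*(W₂) + φ*(W₁)·φ*(W₂ \ v)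
  + (x^{w(v)} - x^{w₁(v)} - x^{w₂(v)})·φ*(W₁ \ v)·φ*(W₂ \ v)`. -/
theorem stmt10 {α β : Type*} [Fintype α] [DecidableEq α] [Fintype β] [DecidableEq β]
    (W₁ : SimpleGraph α) (w₁ : α → ℕ+) (W₂ : SimpleGraph β) (w₂ : β → ℕ+)
    (v₁ : α) (v₂ : β) (wv : ℕ+) :
    wcharPoly (oneSum W₁ W₂ v₁ v₂)
        (Sum.elim (Sum.elim (fun x => w₁ x.1) (fun y => w₂ y.1)) (fun _ => wv)) =
      wcharPoly (deleteVert W₁ v₁) (fun x => w₁ x.1) * wcharPoly W₂ w₂ +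
        wcharPoly W₁ w₁ * wcharPoly (deleteVert W₂ v₂) (fun y => w₂ y.1) +
        (Polynomial.X ^ (wv : ℕ) - Polynomial.X ^ (w₁ v₁ : ℕ) - Polynomial.X ^ (w₂ v₂ : ℕ)) *
          (wcharPoly (deleteVert W₁ v₁) (fun x => w₁ x.1) *
            wcharPoly (deleteVert W₂ v₂) (fun y => w₂ y.1)) := by
  classical
  have h₁ : wcharPoly W₁ w₁
      = (Stmt10Aux.Bmat (Stmt10Aux.wmat (deleteVert W₁ v₁) fun x => w₁ x.1)
          (fun x => Stmt10Aux.wmat W₁ w₁ x.1 v₁)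
          (fun x => Stmt10Aux.wmat W₁ w₁ v₁ x.1)).det
        + Polynomial.X ^ (w₁ v₁ : ℕ)
          * (Stmt10Aux.wmat (deleteVert W₁ v₁) fun x => w₁ x.1).det := by
    rw [Stmt10Aux.split_vertex W₁ w₁ v₁, Stmt10Aux.det_corner]
    rfl
  have h₂ : wcharPoly W₂ w₂
      = (Stmt10Aux.Bmat (Stmt10Aux.wmat (deleteVert W₂ v₂) fun y => w₂ y.1)
          (fun y => Stmt10Aux.wmat W₂ w₂ y.1 v₂)
          (fun y => Stmt10Aux.wmat W₂ w₂ v₂ y.1)).det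
        + Polynomial.X ^ (w₂ v₂ : ℕ)
          * (Stmt10Aux.wmat (deleteVert W₂ v₂) fun y => w₂ y.1).det := by
    rw [Stmt10Aux.split_vertex W₂ w₂ v₂, Stmt10Aux.det_corner]
    rfl
  have hL : wcharPoly (oneSum W₁ W₂ v₁ v₂)
        (Sum.elim (Sum.elim (fun x => w₁ x.1) (fun y => w₂ y.1)) (fun _ => wv))
      = (Stmt10Aux.Nmat (Stmt10Aux.wmat (deleteVert W₁ v₁) fun x => w₁ x.1)
            (Stmt10Aux.wmat (deleteVert W₂ v₂) fun y => w₂ y.1)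
            (fun x => Stmt10Aux.wmat W₁ w₁ x.1 v₁)
            (fun x => Stmt10Aux.wmat W₁ w₁ v₁ x.1)
            (fun y => Stmt10Aux.wmat W₂ w₂ y.1 v₂)
            (fun y => Stmt10Aux.wmat W₂ w₂ v₂ y.1)).det
        + Polynomial.X ^ (wv : ℕ)
          * ((Stmt10Aux.wmat (deleteVert W₁ v₁) fun x => w₁ x.1).det
            * (Stmt10Aux.wmat (deleteVert W₂ v₂) fun y => w₂ y.1).det) := by
    rw [Stmt10Aux.wcharPoly_eq, Stmt10Aux.oneSum_wmat, Stmt10Aux.det_corner,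
      Matrix.det_fromBlocks_zero₂₁]
    rfl
  rw [hL, Stmt10Aux.det_key]
  have e₁ := h₁
  have e₂ := h₂
  rw [Stmt10Aux.wcharPoly_eq (deleteVert W₁ v₁) (fun x => w₁ x.1),
    Stmt10Aux.wcharPoly_eq (deleteVert W₂ v₂) (fun y => w₂ y.1), e₁, e₂]
  ring
end

section
/- Let T(x) be a power series with nonnegative coefficients with T(ρ) = 1 at its radius of convergence ρ ∈ (0,1), and let S(x) be a power series with 0 ≤ ⟨x^n, S⟩ ≤ ⟨x^n, T⟩ for all n, S(α) + α^ℓ = 1 at its radius of convergence α, ⟨x^n, S(x) + x^ℓ⟩ = ⟨x^n, T(x)⟩ for all n ≤ ℓ, and ⟨x^n, S(x)+x^ℓ⟩ < ⟨x^n, T(x)⟩ for some n > ℓ. Then α > ρ. -/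
/-- Comparison of radii of convergence: if `T` has nonnegative coefficients with
`T(ρ) = 1` at its radius of convergence `ρ ∈ (0,1)`, and `S` is coefficientwise
between `0` and `T` with `S(α) + α^ℓ = 1` at its radius of convergence `α`, the
coefficients of `S(x) + x^ℓ` agreeing with those of `T(x)` up to degree `ℓ` and being
strictly smaller in some degree `> ℓ`, then `α > ρ`. -/
theorem stmt17 (ℓ : ℕ) (hℓ : 3 ≤ ℓ) (T S : ℕ → ℝ) (ρ α : ℝ)
    (hρ0 : 0 < ρ) (hρ1 : ρ < 1) (hα0 : 0 < α)
    (hT0 : ∀ n, 0 ≤ T n) (hS0 : ∀ n, 0 ≤ S n) (hST : ∀ n, S n ≤ T n)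
    (hρrad : (∀ x : ℝ, 0 ≤ x → x < ρ → Summable fun n => T n * x ^ n) ∧
      ∀ x : ℝ, ρ < x → ¬ Summable fun n => T n * x ^ n)
    (hαrad : (∀ x : ℝ, 0 ≤ x → x < α → Summable fun n => S n * x ^ n) ∧
      ∀ x : ℝ, α < x → ¬ Summable fun n => S n * x ^ n)
    (hTρ : HasSum (fun n => T n * ρ ^ n) 1)
    (hSα : HasSum (fun n => S n * α ^ n) (1 - α ^ ℓ))
    (hagree : ∀ n ≤ ℓ, S n + (if n = ℓ then (1 : ℝ) else 0) = T n)
    (hlt : ∃ n, ℓ < n ∧ S n < T n) :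
    ρ < α := by
  rcases hlt with ⟨n₀, hn₀ℓ, hn₀⟩
  have hge : ρ ≤ α := by
    by_contra h
    push_neg at h
    obtain ⟨x, hx1, hx2⟩ := exists_between h
    have hx0 : (0:ℝ) ≤ x := le_of_lt (hα0.trans hx1)
    have hTx := hρrad.1 x hx0 hx2
    refine hαrad.2 x hx1 (hTx.of_nonneg_of_le (fun n => mul_nonneg (hS0 n) (pow_nonneg hx0 n)) (fun n => mul_le_mul_of_nonneg_right (hST n) (pow_nonneg hx0 n)))
  rcases lt_or_eq_of_le hge with h | h
  · exact h
  · exfalso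
    subst h
    have hf : HasSum (fun n => T n * ρ ^ n - S n * ρ ^ n) (ρ ^ ℓ) := by
      have := hTρ.sub hSα
      simpa using this
    have hf0 : ∀ n, 0 ≤ T n * ρ ^ n - S n * ρ ^ n := fun n =>
      sub_nonneg.mpr (mul_le_mul_of_nonneg_right (hST n) (pow_nonneg hρ0.le n))
    have hne : ℓ ≠ n₀ := hn₀ℓ.ne
    have hsum_le : ∑ n ∈ ({ℓ, n₀} : Finset ℕ), (T n * ρ ^ n - S n * ρ ^ n) ≤ ρ ^ ℓ := by
      exact sum_le_hasSum _ (fun n _ => hf0 n) hf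
    rw [Finset.sum_pair hne] at hsum_le
    have hfl : T ℓ * ρ ^ ℓ - S ℓ * ρ ^ ℓ = ρ ^ ℓ := by
      have := hagree ℓ le_rfl
      rw [if_pos rfl] at this
      rw [← this]; ring
    have hfn : 0 < T n₀ * ρ ^ n₀ - S n₀ * ρ ^ n₀ := by
      have : 0 < ρ ^ n₀ := pow_pos hρ0 n₀
      nlinarith
    linarith
end
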